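/- arXiv:1910.04808 — 3 statements merged into one kernel-verified Lean document; each statement's English description precedes it below -/
import Mathlib

section
/- Let ω₀ ∈ ℝ^d be subexponentially Diophantine and let g : 𝕋^d → ℂ be analytic on the complexified torus strip of width ξ with summable exponentially weighted Fourier coefficients ‖g‖_ξ = Σ_k e^{2πξ|k|}|ĝ_k| < ∞, and suppose ĝ_0 = 0. Then for every ξ' < ξ the function w with Fourier coefficients ŵ_k = ĝ_k/(2πi ω₀·k) for k ≠ 0 and ŵ_0 = 0 satisfies ‖w‖_{ξ'} < ∞ and solves ω₀·∂_θ w = g. -/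
open Real

/-- ℓ¹-norm of an integer vector, as a real number. -/
def l1 {d : ℕ} (k : Fin d → ℤ) : ℝ := ∑ i, |(k i : ℝ)|

/-- Inner product `ω₀ · k`. -/
def dotp {d : ℕ} (ω : Fin d → ℝ) (k : Fin d → ℤ) : ℝ := ∑ i, ω i * (k i : ℝ)

/-- for a subexponentially Diophantine frequency `ω₀` and `g ∈ 𝒜_ξ`
(described by its Fourier coefficients) with zero average, the function `w`
with Fourier coefficients `ŵ_k = ĝ_k/(2πi ω₀·k)` (`k ≠ 0`), `ŵ_0 = 0`, belongs
to `𝒜_{ξ'}` for every `ξ' < ξ` and solves the cohomology equation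
`ω₀·∂_θ w = g`, i.e. `(2πi ω₀·k) ŵ_k = ĝ_k` for all `k`. -/
theorem cohomology_subexponential {d : ℕ} (ω₀ : Fin d → ℝ)
    (hsub : ∀ ε > 0, ∃ c > 0, ∀ k : Fin d → ℤ, k ≠ 0 →
      c * Real.exp (-ε * l1 k) ≤ |dotp ω₀ k|)
    (ξ : ℝ) (hξ : 0 < ξ) (g : (Fin d → ℤ) → ℂ)
    (hg0 : g 0 = 0)
    (hgsum : Summable fun k : Fin d → ℤ => Real.exp (2 * π * ξ * l1 k) * ‖g k‖) :
    ∀ ξ' < ξ, ∃ w : (Fin d → ℤ) → ℂ,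
      w 0 = 0 ∧
      (∀ k : Fin d → ℤ, k ≠ 0 →
        w k = g k / (2 * π * Complex.I * (dotp ω₀ k : ℂ))) ∧
      (Summable fun k : Fin d → ℤ => Real.exp (2 * π * ξ' * l1 k) * ‖w k‖) ∧
      (∀ k : Fin d → ℤ, 2 * π * Complex.I * (dotp ω₀ k : ℂ) * w k = g k) := by
  intro ξ' hξ'
  have hπ : (0:ℝ) < π := Real.pi_pos
  have hε : (0:ℝ) < 2 * π * (ξ - ξ') := by
    have : (0:ℝ) < ξ - ξ' := sub_pos.mpr hξ'
    positivity
  obtain ⟨c, hc, hdio⟩ := hsub (2 * π * (ξ - ξ')) hε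
  have hl1 : ∀ k : Fin d → ℤ, 0 ≤ l1 k := fun k =>
    Finset.sum_nonneg fun i _ => abs_nonneg _
  have hdne : ∀ k : Fin d → ℤ, k ≠ 0 → dotp ω₀ k ≠ 0 := by
    intro k hk
    have h := hdio k hk
    have hpos : (0:ℝ) < c * Real.exp (-(2 * π * (ξ - ξ')) * l1 k) := by positivity
    intro h0
    rw [h0, abs_zero] at h
    linarith
  refine ⟨fun k => if k = 0 then 0 else g k / (2 * π * Complex.I * (dotp ω₀ k : ℂ)),
    by simp, fun k hk => by simp [hk], ?_, ?_⟩
  · -- summability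
    apply Summable.of_nonneg_of_le _ _ (hgsum.mul_left (1 / (2 * π * c)))
    · intro k
      positivity
    · intro k
      by_cases hk : k = 0
      · simp [hk]
        positivity
      · simp only [if_neg hk]
        have hnorm : ‖g k / (2 * π * Complex.I * (dotp ω₀ k : ℂ))‖
            = ‖g k‖ / (2 * π * |dotp ω₀ k|) := by
          rw [norm_div]
          congr 1
          simp [abs_of_pos hπ, Complex.norm_real, abs_mul]
        rw [hnorm]
        have hd := hdio k hk
        have hdpos : 0 < |dotp ω₀ k| := lt_of_lt_of_le (by positivity) hd
        have hinv : 1 / |dotp ω₀ k| ≤ Real.exp ((2 * π * (ξ - ξ')) * l1 k) / c := by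
          rw [div_le_div_iff₀ hdpos hc]
          calc 1 * c = c * Real.exp (-(2 * π * (ξ - ξ')) * l1 k)
                * Real.exp ((2 * π * (ξ - ξ')) * l1 k) := by
                rw [mul_assoc, ← Real.exp_add]; ring_nf; simp
            _ ≤ |dotp ω₀ k| * Real.exp ((2 * π * (ξ - ξ')) * l1 k) := by
                exact mul_le_mul_of_nonneg_right hd (Real.exp_nonneg _)
            _ = Real.exp ((2 * π * (ξ - ξ')) * l1 k) * |dotp ω₀ k| := mul_comm _ _
        calc Real.exp (2 * π * ξ' * l1 k) * (‖g k‖ / (2 * π * |dotp ω₀ k|))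
            = Real.exp (2 * π * ξ' * l1 k) * ‖g k‖ * (1 / |dotp ω₀ k|) * (1 / (2 * π)) := by
              field_simp [hdpos.ne']
          _ ≤ Real.exp (2 * π * ξ' * l1 k) * ‖g k‖
              * (Real.exp ((2 * π * (ξ - ξ')) * l1 k) / c) * (1 / (2 * π)) := by
              apply mul_le_mul_of_nonneg_right _ (by positivity)
              exact mul_le_mul_of_nonneg_left hinv (by positivity)
          _ = 1 / (2 * π * c) * (Real.exp (2 * π * ξ' * l1 k)
              * Real.exp ((2 * π * (ξ - ξ')) * l1 k) * ‖g k‖) := by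
              field_simp [hc.ne']
          _ = 1 / (2 * π * c) * (Real.exp (2 * π * ξ * l1 k) * ‖g k‖) := by
              have h2 : 2 * π * ξ' * l1 k + 2 * π * (ξ - ξ') * l1 k
                  = 2 * π * ξ * l1 k := by ring
              rw [← Real.exp_add, h2]
  · -- equation
    intro k
    by_cases hk : k = 0
    · simp [hk, hg0]
    · simp only [if_neg hk]
      rw [mul_div_cancel₀]
      apply mul_ne_zero
      · apply mul_ne_zero
        · norm_num [Real.pi_ne_zero]
        · exact Complex.I_ne_zero
      · exact_mod_cast hdne k hk
end

section
/- Let λ ≠ 0 be real and ω₀ ∈ ℝ^d subexponentially Diophantine. For each p ≥ 0 and each E ∈ 𝒜_ξ with (in the case p = 1) vanishing mean, the equation (ω₀·∂_θ + λ(p-1)) A = E (for p ≠ 1) admits a solution A ∈ 𝒜_{ξ'} for every ξ' < ξ, with Fourier coefficients Â_k = Ê_k/(2πi ω₀·k + λ(p-1)). -/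
open Real

/-- for `λ ≠ 0` real, `ω₀` subexponentially Diophantine and `p ≠ 1`,
the equation `(ω₀·∂_θ + λ(p-1)) A = E` with `E ∈ 𝒜_ξ` admits a solution
`A ∈ 𝒜_{ξ'}` for every `ξ' < ξ`, with Fourier coefficients
`Â_k = Ê_k/(2πi ω₀·k + λ(p-1))`. -/
theorem limit_cycle_cohomology {d : ℕ} (ω₀ : Fin d → ℝ) (lam : ℝ) (hlam : lam ≠ 0)
    (hsub : ∀ ε > 0, ∃ c > 0, ∀ k : Fin d → ℤ, k ≠ 0 →
      c * Real.exp (-ε * l1 k) ≤ |dotp ω₀ k|)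
    (p : ℕ) (hp : p ≠ 1) (ξ : ℝ) (hξ : 0 < ξ) (E : (Fin d → ℤ) → ℂ)
    (hEsum : Summable fun k : Fin d → ℤ => Real.exp (2 * π * ξ * l1 k) * ‖E k‖) :
    ∀ ξ' < ξ, ∃ A : (Fin d → ℤ) → ℂ,
      (∀ k : Fin d → ℤ,
        A k = E k / (2 * π * Complex.I * (dotp ω₀ k : ℂ) + ((lam * ((p : ℝ) - 1) : ℝ) : ℂ))) ∧
      (Summable fun k : Fin d → ℤ => Real.exp (2 * π * ξ' * l1 k) * ‖A k‖) ∧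
      (∀ k : Fin d → ℤ,
        (2 * π * Complex.I * (dotp ω₀ k : ℂ) + ((lam * ((p : ℝ) - 1) : ℝ) : ℂ)) * A k = E k) := by
  intro ξ' hξ'
  set c : ℝ := |lam * ((p : ℝ) - 1)| with hc
  have hpne : (p : ℝ) - 1 ≠ 0 := by
    intro h
    apply hp
    have : (p : ℝ) = 1 := by linarith
    exact_mod_cast this
  have hcpos : 0 < c := abs_pos.mpr (mul_ne_zero hlam hpne)
  have hz : ∀ k : Fin d → ℤ,
      (2 * π * Complex.I * (dotp ω₀ k : ℂ) + ((lam * ((p : ℝ) - 1) : ℝ) : ℂ)) ≠ 0 := by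
    intro k h
    have hre := congrArg Complex.re h
    simp [Complex.add_re, Complex.mul_re, Complex.I_re, Complex.I_im] at hre
    rcases hre with h | h
    exacts [hlam h, hpne h]
  have hnorm : ∀ k : Fin d → ℤ,
      c ≤ ‖(2 * π * Complex.I * (dotp ω₀ k : ℂ) + ((lam * ((p : ℝ) - 1) : ℝ) : ℂ))‖ := by
    intro k
    calc c = |((2 * π * Complex.I * (dotp ω₀ k : ℂ) + ((lam * ((p : ℝ) - 1) : ℝ) : ℂ))).re| := by
            simp [hc, Complex.add_re, Complex.mul_re, Complex.I_re, Complex.I_im]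
      _ ≤ _ := Complex.abs_re_le_norm _
  refine ⟨fun k => E k / (2 * π * Complex.I * (dotp ω₀ k : ℂ) + ((lam * ((p : ℝ) - 1) : ℝ) : ℂ)),
    fun k => rfl, ?_, ?_⟩
  · apply Summable.of_nonneg_of_le
      (fun k => by positivity)
      (fun k => ?_) (hEsum.mul_left (1 / c))
    have hl1 : 0 ≤ l1 k := Finset.sum_nonneg fun i _ => abs_nonneg _
    have h1 : Real.exp (2 * π * ξ' * l1 k) ≤ Real.exp (2 * π * ξ * l1 k) := by
      apply Real.exp_le_exp.mpr
      exact mul_le_mul_of_nonneg_right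
        (mul_le_mul_of_nonneg_left hξ'.le (by positivity : (0:ℝ) ≤ 2 * π)) hl1
    have h2 : ‖E k / (2 * π * Complex.I * (dotp ω₀ k : ℂ) + ((lam * ((p : ℝ) - 1) : ℝ) : ℂ))‖
        ≤ ‖E k‖ / c := by
      rw [norm_div]
      apply div_le_div_of_nonneg_left (norm_nonneg _) hcpos (hnorm k)
    calc Real.exp (2 * π * ξ' * l1 k) *
          ‖E k / (2 * π * Complex.I * (dotp ω₀ k : ℂ) + ((lam * ((p : ℝ) - 1) : ℝ) : ℂ))‖
        ≤ Real.exp (2 * π * ξ * l1 k) * (‖E k‖ / c) := by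
          apply mul_le_mul h1 h2 (norm_nonneg _) (Real.exp_nonneg _)
      _ = 1 / c * (Real.exp (2 * π * ξ * l1 k) * ‖E k‖) := by ring
  · intro k
    rw [mul_div_cancel₀ _ (hz k)]
end

section
/- Let ω₀ ∈ ℝ^d satisfy the Diophantine condition |ω₀·k| ≥ γ/|k|^τ for nonzero k. Let g ∈ 𝒜_ξ. Then the cohomology equation ω₀·∂_θ w = g - ĝ_0 has a solution w ∈ 𝒜_{ξ-δ} for every 0 < δ < ξ, with ‖w‖_{ξ-δ} ≤ C γ^{-1} δ^{-τ} ‖g‖_ξ for a constant C = C(τ). Moreover the solution with ŵ_0 = 0 is unique in 𝒜_{ξ-δ}. -/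
open Real

lemma rpow_le_aux {x t a : ℝ} (hx : 0 ≤ x) (ht : 0 < t) (ha : 0 < a) :
    x ^ t ≤ (t / a) ^ t * Real.exp (a * x) := by
  have h2 : a * x / t ≤ Real.exp (a * x / t) := by
    have := Real.add_one_le_exp (a * x / t); linarith
  have h1 : x ≤ (t / a) * Real.exp (a * x / t) := by
    calc x = (t / a) * (a * x / t) := by field_simp
    _ ≤ (t / a) * Real.exp (a * x / t) :=
      mul_le_mul_of_nonneg_left h2 (by positivity)
  calc x ^ t ≤ ((t / a) * Real.exp (a * x / t)) ^ t :=
        Real.rpow_le_rpow hx h1 ht.le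
  _ = (t / a) ^ t * Real.exp (a * x / t) ^ t :=
        Real.mul_rpow (by positivity) (Real.exp_nonneg _)
  _ = (t / a) ^ t * Real.exp (a * x) := by
        rw [← Real.exp_mul]; congr 1; field_simp

lemma l1_nonneg {d : ℕ} (k : Fin d → ℤ) : 0 ≤ l1 k :=
  Finset.sum_nonneg fun i _ => abs_nonneg _

lemma one_le_l1 {d : ℕ} {k : Fin d → ℤ} (hk : k ≠ 0) : 1 ≤ l1 k := by
  obtain ⟨i, hi⟩ := Function.ne_iff.mp hk
  have h1 : (1 : ℝ) ≤ |(k i : ℝ)| := by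
    have := Int.one_le_abs (by simpa using hi)
    rw [← Int.cast_abs]; exact_mod_cast this
  calc (1:ℝ) ≤ |(k i : ℝ)| := h1
  _ ≤ l1 k := by
    unfold l1
    exact Finset.single_le_sum (f := fun j => |(k j : ℝ)|) (fun j _ => abs_nonneg _) (Finset.mem_univ i)

/-- for a `(γ,τ)`-Diophantine frequency `ω₀` and `g ∈ 𝒜_ξ`, the
cohomology equation `ω₀·∂_θ w = g - ĝ₀` has a solution `w ∈ 𝒜_{ξ-δ}` for every
`0 < δ < ξ`, with `‖w‖_{ξ-δ} ≤ C γ⁻¹ δ^{-τ} ‖g‖_ξ` where `C = C(τ)`; the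
solution normalized by `ŵ₀ = 0` is unique in `𝒜_{ξ-δ}`. -/
theorem cohomology_diophantine (d : ℕ) (τ : ℝ) (hτ : 0 < τ) :
    ∃ C > 0, ∀ (γ : ℝ), 0 < γ → ∀ ω₀ : Fin d → ℝ,
      (∀ k : Fin d → ℤ, k ≠ 0 → γ / (l1 k) ^ τ ≤ |dotp ω₀ k|) →
      ∀ (ξ δ : ℝ), 0 < δ → δ < ξ →
      ∀ g : (Fin d → ℤ) → ℂ,
        (Summable fun k : Fin d → ℤ => Real.exp (2 * π * ξ * l1 k) * ‖g k‖) →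
        ∃ w : (Fin d → ℤ) → ℂ,
          w 0 = 0 ∧
          (∀ k : Fin d → ℤ, k ≠ 0 →
            2 * π * Complex.I * (dotp ω₀ k : ℂ) * w k = g k) ∧
          (Summable fun k : Fin d → ℤ => Real.exp (2 * π * (ξ - δ) * l1 k) * ‖w k‖) ∧
          (∑' k : Fin d → ℤ, Real.exp (2 * π * (ξ - δ) * l1 k) * ‖w k‖) ≤
            C * γ⁻¹ * δ ^ (-τ) *
              ∑' k : Fin d → ℤ, Real.exp (2 * π * ξ * l1 k) * ‖g k‖ ∧
          (∀ w' : (Fin d → ℤ) → ℂ,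
            w' 0 = 0 →
            (∀ k : Fin d → ℤ, k ≠ 0 →
              2 * π * Complex.I * (dotp ω₀ k : ℂ) * w' k = g k) →
            (Summable fun k : Fin d → ℤ =>
              Real.exp (2 * π * (ξ - δ) * l1 k) * ‖w' k‖) →
            w' = w) := by
  have hCpos : (0:ℝ) < τ ^ τ := Real.rpow_pos_of_pos hτ τ
  refine ⟨τ ^ τ, hCpos, ?_⟩
  intro γ hγ ω₀ hdio ξ δ hδ hδξ g hg
  have hπ : (0:ℝ) < π := Real.pi_pos
  have hdot : ∀ k : Fin d → ℤ, k ≠ 0 → 0 < |dotp ω₀ k| := by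
    intro k hk
    have h1 := one_le_l1 hk
    have hL : (0:ℝ) < l1 k := by linarith
    have : 0 < γ / (l1 k) ^ τ := div_pos hγ (Real.rpow_pos_of_pos hL τ)
    linarith [hdio k hk]
  have hcne : ∀ k : Fin d → ℤ, k ≠ 0 →
      (2 * π * Complex.I * (dotp ω₀ k : ℂ)) ≠ 0 := by
    intro k hk
    have h1 : (dotp ω₀ k : ℂ) ≠ 0 := by
      simp only [ne_eq, Complex.ofReal_eq_zero]
      intro h
      have hpos := hdot k hk
      rw [h] at hpos; simpa using hpos
    have h2 : (2 * (π:ℂ) * Complex.I) ≠ 0 := by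
      simp [Complex.I_ne_zero, ne_eq, Complex.ofReal_eq_zero, hπ.ne']
    exact mul_ne_zero h2 h1
  set w : (Fin d → ℤ) → ℂ := fun k =>
    if k = 0 then 0 else g k / (2 * π * Complex.I * (dotp ω₀ k : ℂ)) with hw
  have heq : ∀ k : Fin d → ℤ, k ≠ 0 →
      2 * π * Complex.I * (dotp ω₀ k : ℂ) * w k = g k := by
    intro k hk
    simp only [hw, if_neg hk]
    exact mul_div_cancel₀ (g k) (hcne k hk)
  have key : ∀ k : Fin d → ℤ, Real.exp (2 * π * (ξ - δ) * l1 k) * ‖w k‖ ≤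
      τ ^ τ * γ⁻¹ * δ ^ (-τ) * (Real.exp (2 * π * ξ * l1 k) * ‖g k‖) := by
    intro k
    by_cases hk : k = 0
    · simp only [hw, if_pos hk, norm_zero, mul_zero]
      positivity
    · set L := l1 k with hLdef
      have hL1 : (1:ℝ) ≤ L := one_le_l1 hk
      have hL0 : (0:ℝ) ≤ L := by linarith
      set A := |dotp ω₀ k| with hAdef
      have hA : 0 < A := hdot k hk
      have hγA : γ ≤ A * L ^ τ := by
        have := hdio k hk
        have hLτ : (0:ℝ) < L ^ τ := Real.rpow_pos_of_pos (by linarith) τ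
        rw [div_le_iff₀ hLτ] at this
        linarith
      -- norm of w k
      have hnw : ‖w k‖ = ‖g k‖ / (2 * π * A) := by
        simp only [hw, if_neg hk, norm_div]
        congr 1
        simp [norm_mul, Complex.norm_I, Complex.norm_real, Real.norm_eq_abs,
          abs_of_pos hπ, hAdef]
      -- core inequality
      have core : Real.exp (-(2 * π * δ * L)) / (2 * π * A) ≤
          τ ^ τ * γ⁻¹ * δ ^ (-τ) := by
        have hp1 : (1:ℝ) ≤ 2 * π := by nlinarith [Real.pi_gt_three]
        have hprod : 0 ≤ (2 * π - 1) * δ * L :=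
          mul_nonneg (mul_nonneg (by linarith) hδ.le) hL0
        have h3 : Real.exp (-(2 * π * δ * L)) ≤ Real.exp (-(δ * L)) := by
          apply Real.exp_le_exp.mpr
          nlinarith
        have hx : L ^ τ ≤ (τ / δ) ^ τ * Real.exp (δ * L) := rpow_le_aux hL0 hτ hδ
        have h2' : Real.exp (-(δ * L)) * L ^ τ ≤ (τ / δ) ^ τ := by
          calc Real.exp (-(δ * L)) * L ^ τ
              ≤ Real.exp (-(δ * L)) * ((τ / δ) ^ τ * Real.exp (δ * L)) :=
                mul_le_mul_of_nonneg_left hx (Real.exp_nonneg _)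
          _ = (τ / δ) ^ τ * (Real.exp (-(δ * L)) * Real.exp (δ * L)) := by ring
          _ = (τ / δ) ^ τ := by rw [← Real.exp_add]; simp
        have hdiv : (τ / δ) ^ τ = τ ^ τ * δ ^ (-τ) := by
          rw [Real.div_rpow hτ.le hδ.le, Real.rpow_neg hδ.le, div_eq_mul_inv]
        calc Real.exp (-(2 * π * δ * L)) / (2 * π * A)
            ≤ Real.exp (-(δ * L)) / A := by
              apply div_le_div₀ (Real.exp_nonneg _) h3 hA
              nlinarith [mul_nonneg (by linarith : (0:ℝ) ≤ 2 * π - 1) hA.le]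
        _ ≤ Real.exp (-(δ * L)) * L ^ τ / γ := by
              rw [div_le_div_iff₀ hA hγ]
              nlinarith [mul_le_mul_of_nonneg_left hγA (Real.exp_pos (-(δ * L))).le]
        _ ≤ (τ / δ) ^ τ / γ := by
              gcongr
        _ = τ ^ τ * γ⁻¹ * δ ^ (-τ) := by
              rw [hdiv]; field_simp
      have hsplit : Real.exp (2 * π * (ξ - δ) * L) =
          Real.exp (2 * π * ξ * L) * Real.exp (-(2 * π * δ * L)) := by
        rw [← Real.exp_add]; ring_nf
      rw [hnw, hsplit]
      have hEG : 0 ≤ Real.exp (2 * π * ξ * L) * ‖g k‖ :=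
        mul_nonneg (Real.exp_nonneg _) (norm_nonneg _)
      calc Real.exp (2 * π * ξ * L) * Real.exp (-(2 * π * δ * L)) *
            (‖g k‖ / (2 * π * A))
          = (Real.exp (2 * π * ξ * L) * ‖g k‖) *
            (Real.exp (-(2 * π * δ * L)) / (2 * π * A)) := by ring
      _ ≤ (Real.exp (2 * π * ξ * L) * ‖g k‖) * (τ ^ τ * γ⁻¹ * δ ^ (-τ)) :=
            mul_le_mul_of_nonneg_left core hEG
      _ = τ ^ τ * γ⁻¹ * δ ^ (-τ) * (Real.exp (2 * π * ξ * L) * ‖g k‖) := by ring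
  have hsumR : Summable (fun k : Fin d → ℤ =>
      τ ^ τ * γ⁻¹ * δ ^ (-τ) * (Real.exp (2 * π * ξ * l1 k) * ‖g k‖)) :=
    hg.mul_left _
  have hsum : Summable (fun k : Fin d → ℤ =>
      Real.exp (2 * π * (ξ - δ) * l1 k) * ‖w k‖) :=
    Summable.of_nonneg_of_le
      (fun k => mul_nonneg (Real.exp_nonneg _) (norm_nonneg _)) key hsumR
  refine ⟨w, by simp [hw], heq, hsum, ?_, ?_⟩
  · calc (∑' k : Fin d → ℤ, Real.exp (2 * π * (ξ - δ) * l1 k) * ‖w k‖)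
        ≤ ∑' k : Fin d → ℤ,
            τ ^ τ * γ⁻¹ * δ ^ (-τ) * (Real.exp (2 * π * ξ * l1 k) * ‖g k‖) :=
          Summable.tsum_le_tsum key hsum hsumR
    _ = τ ^ τ * γ⁻¹ * δ ^ (-τ) *
          ∑' k : Fin d → ℤ, Real.exp (2 * π * ξ * l1 k) * ‖g k‖ :=
          tsum_mul_left
  · intro w' h0 heq' _
    funext k
    by_cases hk : k = 0
    · simp [hk, h0, hw]
    · have h1 := heq' k hk
      have h2 := heq k hk
      exact mul_left_cancel₀ (hcne k hk) (h1.trans h2.symm)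
end
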